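/- arXiv:quant-ph/0011066 — 2 statements merged into one kernel-verified Lean document; each statement's English description precedes it below -/
import Mathlib

section
/- Monotonicity of the BSA measure under local operations: let {V_i = A_i ⊗ B_i} satisfy Σᵢ Vᵢ†Vᵢ = 1 (a local POVM). Then for any density matrix ρ on C^M ⊗ C^N, 1 − Λ(ρ) ≥ Σᵢ Tr(VᵢρVᵢ†) · (1 − Λ(ρᵢ)), where ρᵢ = VᵢρVᵢ†/Tr(VᵢρVᵢ†) (terms with Tr(VᵢρVᵢ†) = 0 omitted). -/
open Matrix ComplexOrder

noncomputable section

/-- The rank-one operator `|ψ⟩⟨ψ|` as a matrix. -/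
def outer {n : Type*} [Fintype n] (ψ : n → ℂ) : Matrix n n ℂ :=
  Matrix.vecMulVec ψ (star ψ)

/-- The product vector `|e⟩ ⊗ |f⟩` on `C^M ⊗ C^N`. -/
def prodVec {M N : ℕ} (e : Fin M → ℂ) (f : Fin N → ℂ) : Fin M × Fin N → ℂ :=
  fun p => e p.1 * f p.2

/-- A separable positive operator on `C^M ⊗ C^N`: a finite nonnegative combination of
projectors onto product unit vectors. -/
def IsSepOp {M N : ℕ} (σ : Matrix (Fin M × Fin N) (Fin M × Fin N) ℂ) : Prop :=
  ∃ (k : ℕ) (c : Fin k → ℝ) (e : Fin k → Fin M → ℂ) (f : Fin k → Fin N → ℂ),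
    (∀ i, 0 ≤ c i) ∧ (∀ i, star (e i) ⬝ᵥ e i = 1) ∧ (∀ i, star (f i) ⬝ᵥ f i = 1) ∧
    σ = ∑ i, (c i : ℂ) • outer (prodVec (e i) (f i))

/-- A separable state: a separable positive operator of trace one. -/
def IsSepState {M N : ℕ} (σ : Matrix (Fin M × Fin N) (Fin M × Fin N) ℂ) : Prop :=
  IsSepOp σ ∧ σ.trace = 1

/-- Partial transposition on the first (Alice) tensor factor, in the standard basis. -/
def ptA {M N : ℕ} (ρ : Matrix (Fin M × Fin N) (Fin M × Fin N) ℂ) :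
    Matrix (Fin M × Fin N) (Fin M × Fin N) ℂ :=
  Matrix.of fun p q => ρ (q.1, p.2) (p.1, q.2)

/-- The BSA weight `Λ(ρ)`: the supremum of `Tr σ` over separable positive operators `σ`
with `ρ − σ ≥ 0`. -/
def BSAlam {M N : ℕ} (ρ : Matrix (Fin M × Fin N) (Fin M × Fin N) ℂ) : ℝ :=
  sSup {t : ℝ | ∃ σ, IsSepOp σ ∧ (ρ - σ).PosSemidef ∧ σ.trace = (t : ℂ)}

/-! ### Auxiliary lemmas -/

lemma outer_eq {n : Type*} [Fintype n] (ψ : n → ℂ) :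
    outer ψ = replicateCol Unit ψ * (replicateCol Unit ψ)ᴴ := by
  rw [outer, conjTranspose_replicateCol, vecMulVec_eq Unit]

lemma outer_posSemidef {n : Type*} [Fintype n] (ψ : n → ℂ) : (outer ψ).PosSemidef := by
  rw [outer_eq]; exact posSemidef_self_mul_conjTranspose _

lemma posSemidef_smul_real {n : Type*} [Fintype n] {A : Matrix n n ℂ} (hA : A.PosSemidef)
    {c : ℝ} (hc : 0 ≤ c) : ((c : ℂ) • A).PosSemidef := by
  constructor
  · unfold Matrix.IsHermitian
    rw [conjTranspose_smul, hA.1.eq]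
    congr 1
    simp [Complex.ext_iff]
  · intro x
    exact (hA.smul (by exact_mod_cast hc : (0:ℂ) ≤ (c:ℂ))).2 x

lemma posSemidef_add' {n : Type*} [Fintype n] {A B : Matrix n n ℂ}
    (hA : A.PosSemidef) (hB : B.PosSemidef) : (A + B).PosSemidef := by
  refine ⟨hA.1.add hB.1, fun x => ?_⟩
  exact (hA.add hB).2 x

lemma trace_psd_nonneg {n : Type*} [Fintype n] [DecidableEq n] {A : Matrix n n ℂ}
    (hA : A.PosSemidef) : 0 ≤ A.trace := by
  rw [Matrix.trace]
  refine Finset.sum_nonneg fun p _ => ?_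
  have h := hA.dotProduct_mulVec_nonneg (Pi.single p 1)
  have h2 : star (Pi.single p 1) ⬝ᵥ (A *ᵥ Pi.single p 1) = A.diag p := by
    rw [mulVec_single]
    simp [dotProduct, Pi.single_apply, apply_ite, Matrix.diag]
  rwa [h2] at h

lemma trace_psd_re {n : Type*} [Fintype n] [DecidableEq n] {A : Matrix n n ℂ}
    (hA : A.PosSemidef) : A.trace = (A.trace.re : ℂ) := by
  have h := trace_psd_nonneg hA
  rw [Complex.le_def] at h
  exact Complex.ext (by simp) (by simp [← h.2])

lemma trace_psd_re_nonneg {n : Type*} [Fintype n] [DecidableEq n] {A : Matrix n n ℂ}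
    (hA : A.PosSemidef) : 0 ≤ A.trace.re := by
  have h := trace_psd_nonneg hA
  rw [Complex.le_def] at h
  simpa using h.1

lemma conj_outer {n : Type*} [Fintype n] (W : Matrix n n ℂ) (ψ : n → ℂ) :
    W * outer ψ * Wᴴ = outer (W *ᵥ ψ) := by
  rw [outer_eq ψ, outer_eq (W *ᵥ ψ), replicateCol_mulVec, conjTranspose_mul]
  simp only [Matrix.mul_assoc]

open Kronecker in
lemma kron_mulVec {M N : ℕ} (A : Matrix (Fin M) (Fin M) ℂ) (B : Matrix (Fin N) (Fin N) ℂ)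
    (e : Fin M → ℂ) (f : Fin N → ℂ) :
    (A ⊗ₖ B) *ᵥ prodVec e f = prodVec (A *ᵥ e) (B *ᵥ f) := by
  ext p
  simp only [mulVec, dotProduct, prodVec, kroneckerMap_apply, Fintype.sum_prod_type,
    Finset.sum_mul, Finset.mul_sum]
  rw [Finset.sum_comm]
  exact Finset.sum_congr rfl fun r _ => Finset.sum_congr rfl fun s _ => by ring

lemma outer_smul {n : Type*} [Fintype n] (z : ℂ) (ψ : n → ℂ) :
    outer (z • ψ) = (z * star z) • outer ψ := by
  ext p q
  simp [outer, vecMulVec_apply]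
  ring

lemma normalize_vec {n : ℕ} (hn : 0 < n) (v : Fin n → ℂ) :
    ∃ (a : ℝ) (u : Fin n → ℂ), 0 ≤ a ∧ star u ⬝ᵥ u = 1 ∧ v = (a : ℂ) • u := by
  have hdot : ∀ w : Fin n → ℂ, star w ⬝ᵥ w = ((∑ i, Complex.normSq (w i) : ℝ) : ℂ) := by
    intro w
    simp [dotProduct, Complex.normSq_eq_conj_mul_self]
  by_cases hv : v = 0
  · refine ⟨0, Pi.single ⟨0, hn⟩ 1, le_refl _, ?_, by simp [hv]⟩
    rw [hdot]
    norm_num [Pi.single_apply, apply_ite Complex.normSq]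
  · set r : ℝ := ∑ i, Complex.normSq (v i) with hr
    have hrpos : 0 < r := by
      obtain ⟨i, hi⟩ := Function.ne_iff.mp hv
      exact Finset.sum_pos' (fun j _ => Complex.normSq_nonneg _)
        ⟨i, Finset.mem_univ i, Complex.normSq_pos.mpr hi⟩
    set a : ℝ := Real.sqrt r with ha
    have hapos : 0 < a := Real.sqrt_pos.mpr hrpos
    have haC : ((a:ℝ):ℂ) ≠ 0 := Complex.ofReal_ne_zero.mpr hapos.ne'
    refine ⟨a, ((a:ℂ))⁻¹ • v, hapos.le, ?_, ?_⟩
    · rw [hdot]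
      have h1 : ∀ i, Complex.normSq (((((a:ℝ):ℂ))⁻¹ • v) i) = (a*a)⁻¹ * Complex.normSq (v i) := by
        intro i
        simp [Complex.normSq_mul, Complex.normSq_inv, Complex.normSq_ofReal]
      rw [show (∑ i, Complex.normSq (((((a:ℝ):ℂ))⁻¹ • v) i)) = 1 by
        simp only [h1, ← Finset.mul_sum, ← hr]
        rw [ha, Real.mul_self_sqrt hrpos.le, inv_mul_cancel₀ hrpos.ne']]
      simp
    · rw [smul_smul, mul_inv_cancel₀ haC, one_smul]

lemma norm_outer {M N : ℕ} (hM : 0 < M) (hN : 0 < N) (c : ℝ) (hc : 0 ≤ c)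
    (e : Fin M → ℂ) (f : Fin N → ℂ) :
    ∃ (c' : ℝ) (e' : Fin M → ℂ) (f' : Fin N → ℂ), 0 ≤ c' ∧ star e' ⬝ᵥ e' = 1 ∧
      star f' ⬝ᵥ f' = 1 ∧ (c:ℂ) • outer (prodVec e f) = (c':ℂ) • outer (prodVec e' f') := by
  obtain ⟨a, u, ha, hu, rfl⟩ := normalize_vec hM e
  obtain ⟨b, w, hb, hw, rfl⟩ := normalize_vec hN f
  refine ⟨c * ((a*b)*(a*b)), u, w, by positivity, hu, hw, ?_⟩
  have hp : prodVec ((a:ℂ) • u) ((b:ℂ) • w) = (((a*b:ℝ)):ℂ) • prodVec u w := by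
    ext p
    simp [prodVec]
    push_cast
    ring
  rw [hp, outer_smul, smul_smul]
  congr 1
  rw [show star (((a*b:ℝ)):ℂ) = (((a*b:ℝ)):ℂ) by simp [Complex.ext_iff]]
  push_cast
  ring

lemma isSepOp_zero {M N : ℕ} : IsSepOp (0 : Matrix (Fin M × Fin N) (Fin M × Fin N) ℂ) :=
  ⟨0, Fin.elim0, Fin.elim0, Fin.elim0, fun i => i.elim0, fun i => i.elim0, fun i => i.elim0,
    by simp⟩

lemma IsSepOp.posSemidef {M N : ℕ} {σ : Matrix (Fin M × Fin N) (Fin M × Fin N) ℂ}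
    (h : IsSepOp σ) : σ.PosSemidef := by
  obtain ⟨k, c, e, f, hc, -, -, rfl⟩ := h
  exact Finset.sum_induction _ _ (fun a b ha hb => posSemidef_add' ha hb) Matrix.PosSemidef.zero
    (fun i _ => posSemidef_smul_real (outer_posSemidef _) (hc i))

lemma IsSepOp.smul_real {M N : ℕ} {σ : Matrix (Fin M × Fin N) (Fin M × Fin N) ℂ}
    (h : IsSepOp σ) {c : ℝ} (hc : 0 ≤ c) : IsSepOp ((c:ℂ) • σ) := by
  obtain ⟨k, c', e, f, hc', he, hf, rfl⟩ := h
  refine ⟨k, fun i => c * c' i, e, f, fun i => mul_nonneg hc (hc' i), he, hf, ?_⟩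
  rw [Finset.smul_sum]
  refine Finset.sum_congr rfl fun i _ => ?_
  rw [smul_smul]
  congr 1
  push_cast
  ring

open Kronecker in
lemma IsSepOp.conj {M N : ℕ} (hM : 0 < M) (hN : 0 < N)
    {σ : Matrix (Fin M × Fin N) (Fin M × Fin N) ℂ} (hσ : IsSepOp σ)
    (A : Matrix (Fin M) (Fin M) ℂ) (B : Matrix (Fin N) (Fin N) ℂ) :
    IsSepOp ((A ⊗ₖ B) * σ * (A ⊗ₖ B)ᴴ) := by
  obtain ⟨k, c, e, f, hc, he, hf, rfl⟩ := hσ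
  choose c' e' f' hc' he' hf' heq using fun i =>
    norm_outer hM hN (c i) (hc i) (A *ᵥ e i) (B *ᵥ f i)
  refine ⟨k, c', e', f', hc', he', hf', ?_⟩
  rw [Finset.mul_sum, Finset.sum_mul]
  refine Finset.sum_congr rfl fun i _ => ?_
  rw [Matrix.mul_smul, Matrix.smul_mul, conj_outer, kron_mulVec, heq i]

lemma bsa_mem_zero {M N : ℕ} {ρ : Matrix (Fin M × Fin N) (Fin M × Fin N) ℂ}
    (hρ : ρ.PosSemidef) :
    (0:ℝ) ∈ {t : ℝ | ∃ σ, IsSepOp σ ∧ (ρ - σ).PosSemidef ∧ σ.trace = (t : ℂ)} :=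
  ⟨0, isSepOp_zero, by simpa using hρ, by simp⟩

lemma bsa_bddAbove {M N : ℕ} {ρ : Matrix (Fin M × Fin N) (Fin M × Fin N) ℂ}
    (hρ : ρ.PosSemidef) :
    BddAbove {t : ℝ | ∃ σ, IsSepOp σ ∧ (ρ - σ).PosSemidef ∧ σ.trace = (t : ℂ)} := by
  refine ⟨ρ.trace.re, fun x hx => ?_⟩
  obtain ⟨σ, hσ, hpos, htrσ⟩ := hx
  have h1 : 0 ≤ (ρ - σ).trace := trace_psd_nonneg hpos
  rw [Matrix.trace_sub, htrσ, Complex.le_def] at h1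
  have := h1.1
  simp at this
  linarith

open Kronecker in
/-- Monotonicity of the BSA measure under local operations (local POVMs):
if `Vᵢ = Aᵢ ⊗ Bᵢ` with `Σᵢ Vᵢ†Vᵢ = 1`, then
`1 − Λ(ρ) ≥ Σᵢ Tr(VᵢρVᵢ†) (1 − Λ(ρᵢ))` with `ρᵢ = VᵢρVᵢ†/Tr(VᵢρVᵢ†)`
(terms with vanishing trace omitted). -/
theorem stmt17 {M N : ℕ} {k : ℕ} (ρ : Matrix (Fin M × Fin N) (Fin M × Fin N) ℂ)
    (hρ : ρ.PosSemidef) (htr : ρ.trace = 1)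
    (A : Fin k → Matrix (Fin M) (Fin M) ℂ) (B : Fin k → Matrix (Fin N) (Fin N) ℂ)
    (V : Fin k → Matrix (Fin M × Fin N) (Fin M × Fin N) ℂ)
    (hV : ∀ i, V i = (A i) ⊗ₖ (B i))
    (hPOVM : ∑ i, (V i)ᴴ * (V i) = 1)
    (t : Fin k → ℝ) (ht : ∀ i, t i = ((V i) * ρ * (V i)ᴴ).trace.re) :
    ∑ i ∈ Finset.univ.filter (fun i => t i ≠ 0),
        t i * (1 - BSAlam (((t i)⁻¹ : ℂ) • ((V i) * ρ * (V i)ᴴ))) ≤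
      1 - BSAlam ρ := by
  classical
  have hM : 0 < M := by
    rcases Nat.eq_zero_or_pos M with h | h
    · subst h
      rw [Matrix.trace] at htr
      simp at htr
    · exact h
  have hN : 0 < N := by
    rcases Nat.eq_zero_or_pos N with h | h
    · subst h
      rw [Matrix.trace] at htr
      simp at htr
    · exact h
  have psdV : ∀ i, (V i * ρ * (V i)ᴴ).PosSemidef :=
    fun i => hρ.mul_mul_conjTranspose_same (V i)
  have ht_nonneg : ∀ i, 0 ≤ t i := fun i => by
    rw [ht i]; exact trace_psd_re_nonneg (psdV i)
  have htrV : ∀ i, (V i * ρ * (V i)ᴴ).trace = ((t i : ℝ) : ℂ) := fun i => by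
    rw [ht i]; exact trace_psd_re (psdV i)
  have hsum_traces : ∀ X : Matrix (Fin M × Fin N) (Fin M × Fin N) ℂ,
      ∑ i, (V i * X * (V i)ᴴ).trace = X.trace := by
    intro X
    have h1 : ∀ i, (V i * X * (V i)ᴴ).trace = ((V i)ᴴ * (V i) * X).trace := fun i =>
      Matrix.trace_mul_cycle (V i) X (V i)ᴴ
    simp_rw [h1]
    rw [← Matrix.trace_sum, ← Finset.sum_mul, hPOVM, Matrix.one_mul]
  have hsum_t : ∑ i, t i = 1 := by
    have h2 : ((∑ i, t i : ℝ) : ℂ) = 1 := by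
      push_cast
      simp_rw [← htrV]
      rw [hsum_traces ρ, htr]
    exact_mod_cast h2
  have key : BSAlam ρ ≤ ∑ i ∈ Finset.univ.filter (fun i => t i ≠ 0),
      t i * BSAlam (((t i)⁻¹ : ℂ) • ((V i) * ρ * (V i)ᴴ)) := by
    unfold BSAlam
    apply csSup_le ⟨0, bsa_mem_zero hρ⟩
    rintro s ⟨σ, hsep, hpos, htrσ⟩
    have hσpsd := hsep.posSemidef
    have psdσV : ∀ i, (V i * σ * (V i)ᴴ).PosSemidef :=
      fun i => hσpsd.mul_mul_conjTranspose_same _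
    have psdρσV : ∀ i, (V i * (ρ - σ) * (V i)ᴴ).PosSemidef :=
      fun i => hpos.mul_mul_conjTranspose_same _
    set g : Fin k → ℝ := fun i => (V i * σ * (V i)ᴴ).trace.re with hg
    have hgnn : ∀ i, 0 ≤ g i := fun i => trace_psd_re_nonneg (psdσV i)
    have hgtr : ∀ i, (V i * σ * (V i)ᴴ).trace = ((g i : ℝ) : ℂ) :=
      fun i => trace_psd_re (psdσV i)
    have hsplit : ∀ i, V i * σ * (V i)ᴴ + V i * (ρ - σ) * (V i)ᴴ = V i * ρ * (V i)ᴴ := by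
      intro i
      rw [Matrix.mul_sub, Matrix.sub_mul]
      abel
    have hs : s = ∑ i, g i := by
      have h3 : ((s:ℝ):ℂ) = ((∑ i, g i : ℝ):ℂ) := by
        push_cast
        simp_rw [← hgtr]
        rw [hsum_traces σ, ← htrσ]
      exact_mod_cast h3
    have hzero : ∀ i, t i = 0 → g i = 0 := by
      intro i hti
      have h0 : (V i * ρ * (V i)ᴴ).trace = 0 := by rw [htrV i, hti]; simp
      have hadd : (V i * σ * (V i)ᴴ).trace + (V i * (ρ - σ) * (V i)ᴴ).trace = 0 := by
        rw [← Matrix.trace_add, hsplit i, h0]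
      have h1 := trace_psd_nonneg (psdσV i)
      have h2 := trace_psd_nonneg (psdρσV i)
      have h4 : (V i * σ * (V i)ᴴ).trace = 0 := by
        refine le_antisymm ?_ h1
        calc (V i * σ * (V i)ᴴ).trace
            ≤ (V i * σ * (V i)ᴴ).trace + (V i * (ρ - σ) * (V i)ᴴ).trace :=
              le_add_of_nonneg_right h2
          _ = 0 := hadd
      rw [hg]
      simp only [h4, Complex.zero_re]
    rw [hs, ← Finset.sum_subset (Finset.filter_subset (fun i => t i ≠ 0) Finset.univ)
      (fun i _ hi => hzero i (by simpa using hi))]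
    refine Finset.sum_le_sum fun i hiF => ?_
    have hti : t i ≠ 0 := (Finset.mem_filter.mp hiF).2
    have htipos : 0 < t i := lt_of_le_of_ne (ht_nonneg i) (Ne.symm hti)
    have hinv : ((t i : ℂ))⁻¹ = (((t i)⁻¹ : ℝ) : ℂ) := by push_cast; ring
    have hρipsd : ((((t i):ℂ))⁻¹ • (V i * ρ * (V i)ᴴ)).PosSemidef := by
      rw [hinv]
      exact posSemidef_smul_real (psdV i) (inv_nonneg.mpr (ht_nonneg i))
    have hmem : (t i)⁻¹ * g i ∈ {x : ℝ | ∃ σ',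
        IsSepOp σ' ∧ ((((t i):ℂ))⁻¹ • (V i * ρ * (V i)ᴴ) - σ').PosSemidef ∧
        σ'.trace = ((x:ℝ) : ℂ)} := by
      refine ⟨((((t i)⁻¹ : ℝ)) : ℂ) • (V i * σ * (V i)ᴴ), ?_, ?_, ?_⟩
      · have hsepi : IsSepOp (V i * σ * (V i)ᴴ) := by
          rw [hV i]
          exact hsep.conj hM hN (A i) (B i)
        exact hsepi.smul_real (inv_nonneg.mpr (ht_nonneg i))
      · have heq : (((t i):ℂ))⁻¹ • (V i * ρ * (V i)ᴴ) -
            ((((t i)⁻¹ : ℝ)) : ℂ) • (V i * σ * (V i)ᴴ) =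
            ((((t i)⁻¹ : ℝ)) : ℂ) • (V i * (ρ - σ) * (V i)ᴴ) := by
          rw [hinv, ← smul_sub, Matrix.mul_sub, Matrix.sub_mul]
        rw [heq]
        exact posSemidef_smul_real (psdρσV i) (inv_nonneg.mpr (ht_nonneg i))
      · rw [Matrix.trace_smul, hgtr i]
        push_cast
        simp [smul_eq_mul]
    have hle : (t i)⁻¹ * g i ≤ BSAlam ((((t i):ℂ))⁻¹ • (V i * ρ * (V i)ᴴ)) :=
      le_csSup (bsa_bddAbove hρipsd) hmem
    calc g i = t i * ((t i)⁻¹ * g i) := by field_simp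
      _ ≤ t i * BSAlam ((((t i):ℂ))⁻¹ • (V i * ρ * (V i)ᴴ)) :=
        mul_le_mul_of_nonneg_left hle (ht_nonneg i)
  have hsumF : ∑ i ∈ Finset.univ.filter (fun i => t i ≠ 0), t i = 1 := by
    rw [Finset.sum_filter_ne_zero]
    exact hsum_t
  calc ∑ i ∈ Finset.univ.filter (fun i => t i ≠ 0),
        t i * (1 - BSAlam (((t i)⁻¹ : ℂ) • ((V i) * ρ * (V i)ᴴ)))
      = ∑ i ∈ Finset.univ.filter (fun i => t i ≠ 0),
          (t i - t i * BSAlam (((t i)⁻¹ : ℂ) • ((V i) * ρ * (V i)ᴴ))) := by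
        refine Finset.sum_congr rfl fun i _ => by ring
    _ = 1 - ∑ i ∈ Finset.univ.filter (fun i => t i ≠ 0),
          t i * BSAlam (((t i)⁻¹ : ℂ) • ((V i) * ρ * (V i)ᴴ)) := by
        rw [Finset.sum_sub_distrib, hsumF]
    _ ≤ 1 - BSAlam ρ := by linarith [key]
end
end

section
/- PPT-maximal subtraction: let ρ be a PPT state (ρ ≥ 0 and ρ^{T_A} ≥ 0) on C^M ⊗ C^N and |e,f⟩ a product unit vector with |e,f⟩ ∈ R(ρ) and |e*,f⟩ ∈ R(ρ^{T_A}). Then the maximal Λ ≥ 0 such that both ρ − Λ|e,f⟩⟨e,f| ≥ 0 and ρ^{T_A} − Λ|e*,f⟩⟨e*,f| ≥ 0 equals min( (⟨e,f|ρ⁻¹|e,f⟩)⁻¹ , (⟨e*,f|(ρ^{T_A})⁻¹|e*,f⟩)⁻¹ ), where the inverses are pseudoinverses on the respective ranges. If |e,f⟩ ∉ R(ρ) or |e*,f⟩ ∉ R(ρ^{T_A}), the maximal Λ is 0. -/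
open Matrix ComplexOrder

noncomputable section

section Aux

variable {n : Type*} [Fintype n] [DecidableEq n]

lemma outer_mulVec (ψ x : n → ℂ) : outer ψ *ᵥ x = (star ψ ⬝ᵥ x) • ψ := by
  ext i
  simp only [outer, mulVec, dotProduct, vecMulVec_apply, Pi.smul_apply, smul_eq_mul,
    Pi.star_apply]
  rw [Finset.sum_mul]
  exact Finset.sum_congr rfl fun j _ => by ring

lemma outer_isHermitian (ψ : n → ℂ) : (outer ψ).IsHermitian := by
  ext i j
  simp only [outer, conjTranspose_apply, vecMulVec_apply, Pi.star_apply, star_mul', star_star]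
  ring

lemma quad (σ : Matrix n n ℂ) (ψ x : n → ℂ) (l : ℝ) :
    star x ⬝ᵥ ((σ - (l : ℂ) • outer ψ) *ᵥ x)
      = star x ⬝ᵥ (σ *ᵥ x) - (l : ℂ) * ((‖star ψ ⬝ᵥ x‖ ^ 2 : ℝ) : ℂ) := by
  rw [sub_mulVec, dotProduct_sub, smul_mulVec, dotProduct_smul, outer_mulVec,
    dotProduct_smul]
  have h1 : star x ⬝ᵥ ψ = star (star ψ ⬝ᵥ x) := star_dotProduct _ _
  have h2 : (star ψ ⬝ᵥ x) * star (star ψ ⬝ᵥ x) = ((‖star ψ ⬝ᵥ x‖ ^ 2 : ℝ) : ℂ) := by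
    rw [Complex.star_def, Complex.mul_conj]
    norm_cast
    simp [Complex.normSq_eq_norm_sq]
  rw [smul_eq_mul, smul_eq_mul, h1, h2]

lemma psd_dot_real {σ : Matrix n n ℂ} (hσ : σ.PosSemidef) (x : n → ℂ) :
    star x ⬝ᵥ (σ *ᵥ x) = (((star x ⬝ᵥ (σ *ᵥ x)).re : ℝ) : ℂ) := by
  have h := hσ.dotProduct_mulVec_nonneg x
  rw [Complex.le_def] at h
  apply Complex.ext <;> simp [← h.2]

lemma dot_shift {σ : Matrix n n ℂ} (hσ : σ.IsHermitian) (φ x : n → ℂ) :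
    star (σ *ᵥ φ) ⬝ᵥ x = star φ ⬝ᵥ (σ *ᵥ x) := by
  rw [star_mulVec, ← dotProduct_mulVec, hσ.eq]

open scoped MatrixOrder in
lemma cs {σ : Matrix n n ℂ} (hσ : σ.PosSemidef) (x y : n → ℂ) :
    ‖star x ⬝ᵥ (σ *ᵥ y)‖ ^ 2 ≤ (star x ⬝ᵥ (σ *ᵥ x)).re * (star y ⬝ᵥ (σ *ᵥ y)).re := by
  have hS : (CFC.sqrt σ) * (CFC.sqrt σ) = σ := CFC.sqrt_mul_sqrt_self σ hσ.nonneg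
  have hSh : (CFC.sqrt σ).IsHermitian := (CFC.sqrt_nonneg σ).posSemidef.1
  have key : ∀ u v : n → ℂ, star u ⬝ᵥ (σ *ᵥ v) = star ((CFC.sqrt σ) *ᵥ u) ⬝ᵥ ((CFC.sqrt σ) *ᵥ v) := by
    intro u v
    rw [star_mulVec, ← dotProduct_mulVec, hSh.eq, mulVec_mulVec, hS]
  set u : EuclideanSpace ℂ n := (WithLp.equiv 2 _).symm ((CFC.sqrt σ) *ᵥ x)
  set v : EuclideanSpace ℂ n := (WithLp.equiv 2 _).symm ((CFC.sqrt σ) *ᵥ y)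
  have h1 : (inner ℂ u v : ℂ) = star ((CFC.sqrt σ) *ᵥ x) ⬝ᵥ ((CFC.sqrt σ) *ᵥ y) := 
    (EuclideanSpace.inner_eq_star_dotProduct _ _).trans (dotProduct_comm _ _)
  have h2 : (inner ℂ u u : ℂ) = star ((CFC.sqrt σ) *ᵥ x) ⬝ᵥ ((CFC.sqrt σ) *ᵥ x) := 
    (EuclideanSpace.inner_eq_star_dotProduct _ _).trans (dotProduct_comm _ _)
  have h3 : (inner ℂ v v : ℂ) = star ((CFC.sqrt σ) *ᵥ y) ⬝ᵥ ((CFC.sqrt σ) *ᵥ y) := 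
    (EuclideanSpace.inner_eq_star_dotProduct _ _).trans (dotProduct_comm _ _)
  have h4 := inner_mul_inner_self_le (𝕜 := ℂ) u v
  rw [key x x, key y y, key x y, ← h1, ← h2, ← h3]
  have h5 : ‖(inner ℂ v u : ℂ)‖ = ‖(inner ℂ u v : ℂ)‖ := (norm_inner_symm u v).symm
  calc ‖(inner ℂ u v : ℂ)‖ ^ 2 = ‖(inner ℂ u v : ℂ)‖ * ‖(inner ℂ v u : ℂ)‖ := by rw [h5]; ring
    _ ≤ RCLike.re (inner ℂ u u : ℂ) * RCLike.re (inner ℂ v v : ℂ) := h4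
    _ = (inner ℂ u u : ℂ).re * (inner ℂ v v : ℂ).re := rfl

lemma key_lemma {σ : Matrix n n ℂ} (hσ : σ.PosSemidef) {ψ φ : n → ℂ}
    (hφ : σ *ᵥ φ = ψ) (hψ0 : ψ ≠ 0) :
    0 < (star ψ ⬝ᵥ φ).re ∧
      ∀ l : ℝ, ((σ - (l : ℂ) • outer ψ).PosSemidef ↔ l ≤ 1 / (star ψ ⬝ᵥ φ).re) := by
  have hherm := hσ.1
  have hshift : ∀ x, star ψ ⬝ᵥ x = star φ ⬝ᵥ (σ *ᵥ x) := fun x => by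
    rw [← hφ, dot_shift hherm]
  have heq : star ψ ⬝ᵥ φ = star φ ⬝ᵥ (σ *ᵥ φ) := hshift φ
  set t := (star ψ ⬝ᵥ φ).re with ht_def
  have htc : star ψ ⬝ᵥ φ = ((t : ℝ) : ℂ) := by rw [ht_def, heq]; exact psd_dot_real hσ φ
  have ht0 : 0 < t := by
    have h2 := hσ.dotProduct_mulVec_nonneg φ
    rw [Complex.le_def] at h2
    have hge : 0 ≤ t := by rw [ht_def, heq]; simpa using h2.1
    rcases hge.lt_or_eq with h | h
    · exact h
    · exfalso
      have hz : star φ ⬝ᵥ (σ *ᵥ φ) = 0 := by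
        rw [psd_dot_real hσ φ, ← heq, ← ht_def, ← h]; simp
      have := (hσ.dotProduct_mulVec_zero_iff φ).mp hz
      exact hψ0 (hφ ▸ this)
  refine ⟨ht0, fun l => ⟨?_, ?_⟩⟩
  · intro hpsd
    have h := hpsd.dotProduct_mulVec_nonneg φ
    rw [quad, ← heq, htc] at h
    have hnorm : ‖((t : ℝ) : ℂ)‖ = t := by
      rw [Complex.norm_real]; exact abs_of_pos ht0
    rw [hnorm] at h
    have h' : (0 : ℂ) ≤ (((t - l * t ^ 2 : ℝ)) : ℂ) := by
      convert h using 1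
      push_cast
      ring
    rw [Complex.zero_le_real] at h'
    rw [le_div_iff₀ ht0]
    nlinarith
  · intro hl
    have hlt : l * t ≤ 1 := by
      rw [le_div_iff₀ ht0] at hl; exact hl
    refine Matrix.PosSemidef.of_dotProduct_mulVec_nonneg ?_ ?_
    · apply hherm.sub
      have : ((l : ℂ) • outer ψ)ᴴ = (l : ℂ) • outer ψ := by
        rw [conjTranspose_smul, (outer_isHermitian ψ).eq]
        congr 1
        simp [Complex.star_def]
      exact this
    · intro x
      rw [quad]
      set p := star ψ ⬝ᵥ x with hp
      set q := (star x ⬝ᵥ (σ *ᵥ x)).re with hq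
      have hq0 : 0 ≤ q := by
        have h2 := hσ.dotProduct_mulVec_nonneg x
        rw [Complex.le_def] at h2
        simpa using h2.1
      have hcs : ‖p‖ ^ 2 ≤ t * q := by
        have := cs hσ φ x
        rw [← hshift x, ← heq, ← hp, ← hq, ← ht_def] at this
        exact this
      have hgoal : 0 ≤ q - l * ‖p‖ ^ 2 := by
        rcases le_or_gt l 0 with h | h
        · nlinarith [sq_nonneg ‖p‖]
        · nlinarith [sq_nonneg ‖p‖]
      rw [psd_dot_real hσ x, ← hq]
      have : ((q : ℝ) : ℂ) - (l : ℂ) * ((‖p‖ ^ 2 : ℝ) : ℂ) = (((q - l * ‖p‖ ^ 2 : ℝ)) : ℂ) := by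
        push_cast; ring
      rw [this, Complex.zero_le_real]
      exact hgoal

lemma mem_range_of_orth {σ : Matrix n n ℂ} (hσ : σ.IsHermitian) {ψ : n → ℂ}
    (h : ∀ z, σ *ᵥ z = 0 → star z ⬝ᵥ ψ = 0) : ψ ∈ Set.range σ.mulVec := by
  set T : EuclideanSpace ℂ n →ₗ[ℂ] EuclideanSpace ℂ n := Matrix.toEuclideanLin σ with hT
  have hadj : LinearMap.adjoint T = T := by
    rw [hT, ← Matrix.toEuclideanLin_conjTranspose_eq_adjoint, hσ.eq]
  have hle : LinearMap.range T ≤ (LinearMap.ker T)ᗮ := by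
    rintro _ ⟨x, rfl⟩
    rw [Submodule.mem_orthogonal]
    intro u hu
    have h1 : (inner ℂ u (T x) : ℂ) = inner ℂ (T u) x := by
      conv_rhs => rw [← hadj]
      exact (LinearMap.adjoint_inner_left T x u).symm
    rw [h1, LinearMap.mem_ker.mp hu, inner_zero_left]
  have heq : LinearMap.range T = (LinearMap.ker T)ᗮ := by
    apply Submodule.eq_of_le_of_finrank_eq hle
    have h1 := LinearMap.finrank_range_add_finrank_ker T
    have h2 := Submodule.finrank_add_finrank_orthogonal (K := LinearMap.ker T)
    omega
  have hmem : ((WithLp.equiv 2 _).symm ψ : EuclideanSpace ℂ n) ∈ (LinearMap.ker T)ᗮ := by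
    rw [Submodule.mem_orthogonal]
    intro u hu
    have hu' : σ *ᵥ (WithLp.equiv 2 _ u) = 0 := by
      have h0 := LinearMap.mem_ker.mp hu
      have := congrArg (WithLp.equiv 2 (n → ℂ)) h0
      simpa [hT, Matrix.ofLp_toEuclideanLin_apply] using this
    have := h _ hu'
    rw [dotProduct_comm] at this
    simpa [EuclideanSpace.inner_eq_star_dotProduct] using this
  rw [← heq] at hmem
  obtain ⟨x, hx⟩ := hmem
  refine ⟨WithLp.equiv 2 _ x, ?_⟩
  have := congrArg (WithLp.equiv 2 (n → ℂ)) hx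
  simpa [hT, Matrix.ofLp_toEuclideanLin_apply] using this

end Aux

lemma prodVec_dot {M N : ℕ} (a b : Fin M → ℂ) (c d : Fin N → ℂ) :
    star (prodVec a c) ⬝ᵥ prodVec b d = (star a ⬝ᵥ b) * (star c ⬝ᵥ d) := by
  rw [dotProduct, dotProduct, dotProduct, Fintype.sum_prod_type, Finset.sum_mul_sum]
  refine Finset.sum_congr rfl fun i _ => Finset.sum_congr rfl fun j _ => ?_
  simp only [prodVec, Pi.star_apply, star_mul']
  ring

/-- PPT-maximal subtraction: for a PPT state `ρ` and a product unit vector `|e,f⟩`,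
if `|e,f⟩ = ρφ ∈ R(ρ)` and `|e*,f⟩ = ρ^{T_A}φ' ∈ R(ρ^{T_A})`, then the maximal `Λ ≥ 0`
keeping both `ρ − Λ|e,f⟩⟨e,f|` and `ρ^{T_A} − Λ|e*,f⟩⟨e*,f|` positive semidefinite is
`min(⟨e,f|ρ⁻¹|e,f⟩⁻¹, ⟨e*,f|(ρ^{T_A})⁻¹|e*,f⟩⁻¹)` (pseudoinverses on the ranges);
if one of the range conditions fails, the maximal `Λ` is `0`. -/
theorem stmt18 {M N : ℕ} (ρ : Matrix (Fin M × Fin N) (Fin M × Fin N) ℂ)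
    (hρ : ρ.PosSemidef) (hρtr : ρ.trace = 1) (hppt : (ptA ρ).PosSemidef)
    (e : Fin M → ℂ) (f : Fin N → ℂ)
    (he : star e ⬝ᵥ e = 1) (hf : star f ⬝ᵥ f = 1)
    (ψ ψ' : Fin M × Fin N → ℂ)
    (hψ : ψ = prodVec e f) (hψ' : ψ' = prodVec (star e) f) :
    (∀ φ φ' : Fin M × Fin N → ℂ, ρ *ᵥ φ = ψ → (ptA ρ) *ᵥ φ' = ψ' →
      IsGreatest {l : ℝ | 0 ≤ l ∧ (ρ - (l : ℂ) • outer ψ).PosSemidef ∧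
          (ptA ρ - (l : ℂ) • outer ψ').PosSemidef}
        (min (1 / (star ψ ⬝ᵥ φ).re) (1 / (star ψ' ⬝ᵥ φ').re))) ∧
    ((ψ ∉ Set.range ρ.mulVec ∨ ψ' ∉ Set.range (ptA ρ).mulVec) →
      IsGreatest {l : ℝ | 0 ≤ l ∧ (ρ - (l : ℂ) • outer ψ).PosSemidef ∧
          (ptA ρ - (l : ℂ) • outer ψ').PosSemidef} 0) := by
  have he' : star (star e) ⬝ᵥ star e = 1 := by
    rw [star_star, dotProduct_comm]; exact he
  have hψu : star ψ ⬝ᵥ ψ = 1 := by rw [hψ, prodVec_dot, he, hf, one_mul]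
  have hψ'u : star ψ' ⬝ᵥ ψ' = 1 := by rw [hψ', prodVec_dot, he', hf, one_mul]
  have hψ0 : ψ ≠ 0 := by
    intro h0
    rw [h0] at hψu
    simp at hψu
  have hψ'0 : ψ' ≠ 0 := by
    intro h0
    rw [h0] at hψ'u
    simp at hψ'u
  constructor
  · intro φ φ' hφ hφ'
    obtain ⟨ht1, hiff1⟩ := key_lemma hρ hφ hψ0
    obtain ⟨ht2, hiff2⟩ := key_lemma hppt hφ' hψ'0
    constructor
    · refine ⟨le_min (by positivity) (by positivity), ?_, ?_⟩
      · exact (hiff1 _).mpr (min_le_left _ _)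
      · exact (hiff2 _).mpr (min_le_right _ _)
    · rintro l ⟨-, h1, h2⟩
      exact le_min ((hiff1 l).mp h1) ((hiff2 l).mp h2)
  · intro hcase
    constructor
    · refine ⟨le_refl 0, ?_, ?_⟩
      · simpa using hρ
      · simpa using hppt
    · rintro l ⟨hl0, h1, h2⟩
      by_contra hlt
      push_neg at hlt
      have hker : ∀ (σ : Matrix (Fin M × Fin N) (Fin M × Fin N) ℂ) (v : Fin M × Fin N → ℂ),
          σ.PosSemidef → (σ - (l : ℂ) • outer v).PosSemidef → v ∈ Set.range σ.mulVec := by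
        intro σ v hs hps
        apply mem_range_of_orth hs.1
        intro z hz
        have h := hps.dotProduct_mulVec_nonneg z
        rw [quad, hz, dotProduct_zero, zero_sub] at h
        have h' : (0 : ℂ) ≤ (((-(l * ‖star v ⬝ᵥ z‖ ^ 2) : ℝ)) : ℂ) := by
          convert h using 1
          push_cast
          ring
        rw [Complex.zero_le_real] at h'
        have hsq : ‖star v ⬝ᵥ z‖ ^ 2 = 0 := le_antisymm (by nlinarith) (sq_nonneg _)
        have hz0 : ‖star v ⬝ᵥ z‖ = 0 := by
          have := pow_eq_zero_iff (n := 2) (by norm_num) |>.mp hsq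
          exact this
        have : star v ⬝ᵥ z = 0 := norm_eq_zero.mp hz0
        rw [star_dotProduct, this, star_zero]
      have hmem1 := hker ρ ψ hρ h1
      have hmem2 := hker (ptA ρ) ψ' hppt h2
      rcases hcase with hc | hc
      · exact hc hmem1
      · exact hc hmem2
end
end
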